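/- arXiv:2006.16561 — 3 statements merged into one kernel-verified Lean document; each statement's English description precedes it below -/
import Mathlib

section
/- Let φ : ℝ → ℝ be differentiable and suppose ψ = (φ')² is convex. Then for all real numbers a and b, (φ(a) - φ(b))² ≤ (1/2) · (a - b)² · (ψ(a) + ψ(b)). -/
/-!
By the fundamental theorem of calculus and Jensen's inequality for `x ↦ x²`,
`(φ b - φ a)² = (∫ₐᵇ φ')² ≤ (b - a) ∫ₐᵇ ψ`. The right half of the Hermite–Hadamard
inequality for the convex function `ψ = φ'²` bounds `∫ₐᵇ ψ` by `(b - a) (ψ a + ψ b) / 2`;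
it follows by pairing each `x` with its reflection `a + b - x`, since
`ψ x + ψ (a + b - x) ≤ ψ a + ψ b`.
-/

open MeasureTheory intervalIntegral Set

theorem ConvexOn.map_add_map_reflect_le {f : ℝ → ℝ} {a b x : ℝ}
    (hf : ConvexOn ℝ (Icc a b) f) (hx : x ∈ Icc a b) :
    f x + f (a + b - x) ≤ f a + f b := by
  obtain ⟨hax, hxb⟩ := hx
  rcases (hax.trans hxb).eq_or_lt with rfl | hab
  · rw [le_antisymm hxb hax]; simp
  have hne : b - a ≠ 0 := sub_ne_zero.2 hab.ne'
  have ha : a ∈ Icc a b := left_mem_Icc.2 hab.le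
  have hb : b ∈ Icc a b := right_mem_Icc.2 hab.le
  set s := (b - x) / (b - a)
  set t := (x - a) / (b - a)
  have hs : 0 ≤ s := div_nonneg (by linarith) (by linarith)
  have ht : 0 ≤ t := div_nonneg (by linarith) (by linarith)
  have hst : s + t = 1 := by simp only [s, t]; field_simp; ring
  have hfx := hf.2 ha hb hs ht hst
  have hfx' := hf.2 ha hb ht hs (by rw [add_comm, hst])
  have hx : s * a + t * b = x := by simp only [s, t]; field_simp; ring
  have hx' : t * a + s * b = a + b - x := by simp only [s, t]; field_simp; ring
  simp only [smul_eq_mul, hx, hx'] at hfx hfx'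
  linarith [congrArg (· * (f a + f b)) hst]

theorem ConvexOn.integral_le_mul_add_div_two {f : ℝ → ℝ} {a b : ℝ} (hab : a ≤ b)
    (hf : ConvexOn ℝ (Icc a b) f) (hfi : IntervalIntegrable f volume a b) :
    ∫ x in a..b, f x ≤ (b - a) * (f a + f b) / 2 := by
  have hreflect : ∫ x in a..b, f (a + b - x) = ∫ x in a..b, f x := by
    simp [integral_comp_sub_left]
  have hreflect_int : IntervalIntegrable (fun x => f (a + b - x)) volume a b := by
    simpa using (hfi.comp_sub_left (a + b)).symm
  have hsum : ∫ x in a..b, (f x + f (a + b - x)) ≤ ∫ _ in a..b, (f a + f b) :=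
    integral_mono_on hab (hfi.add hreflect_int) intervalIntegrable_const
      fun x hx => hf.map_add_map_reflect_le hx
  rw [integral_add hfi hreflect_int, hreflect, intervalIntegral.integral_const,
    smul_eq_mul] at hsum
  linarith

theorem sq_setIntegral_le_measureReal_mul_setIntegral_sq {α : Type*} [MeasurableSpace α]
    {μ : Measure α} {t : Set α} {g : α → ℝ} (ht : μ t ≠ ⊤) (hg : IntegrableOn g t μ)
    (hg2 : IntegrableOn (fun x => g x ^ 2) t μ) :
    (∫ x in t, g x ∂μ) ^ 2 ≤ μ.real t * ∫ x in t, g x ^ 2 ∂μ := by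
  rcases eq_or_ne (μ t) 0 with h0 | h0
  · simp [setIntegral_measure_zero _ h0]
  have hne : μ.real t ≠ 0 := (ENNReal.toReal_pos h0 ht).ne'
  have hjensen := (even_two.convexOn_pow (𝕜 := ℝ)).map_set_average_le
    (continuous_pow 2).continuousOn isClosed_univ h0 ht (.of_forall fun _ => mem_univ _) hg hg2
  rw [setAverage_eq, setAverage_eq, smul_eq_mul, smul_eq_mul, mul_pow] at hjensen
  calc (∫ x in t, g x ∂μ) ^ 2
        = μ.real t ^ 2 * ((μ.real t)⁻¹ ^ 2 * (∫ x in t, g x ∂μ) ^ 2) := by field_simp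
    _ ≤ μ.real t ^ 2 * ((μ.real t)⁻¹ * ∫ x in t, g x ^ 2 ∂μ) := by gcongr
    _ = μ.real t * ∫ x in t, g x ^ 2 ∂μ := by field_simp

theorem MeasureTheory.IntegrableOn.of_sq {α : Type*} [MeasurableSpace α]
    {μ : Measure α} {t : Set α} {g : α → ℝ} (ht : μ t ≠ ⊤)
    (hg : AEStronglyMeasurable g (μ.restrict t))
    (hg2 : IntegrableOn (fun x => g x ^ 2) t μ) : IntegrableOn g t μ :=
  have : Fact (μ t < ⊤) := ⟨ht.lt_top⟩
  ((memLp_two_iff_integrable_sq hg).2 hg2).integrable one_le_two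

theorem sq_intervalIntegral_le {g : ℝ → ℝ} {a b : ℝ} (hab : a ≤ b)
    (hg : IntervalIntegrable g volume a b)
    (hg2 : IntervalIntegrable (fun x => g x ^ 2) volume a b) :
    (∫ x in a..b, g x) ^ 2 ≤ (b - a) * ∫ x in a..b, g x ^ 2 := by
  simpa only [integral_of_le hab, Real.volume_real_Ioc_of_le hab] using
    sq_setIntegral_le_measureReal_mul_setIntegral_sq measure_Ioc_lt_top.ne hg.1 hg2.1

theorem sq_sub_le_of_convexOn_deriv_sq {φ : ℝ → ℝ} {a b : ℝ} (hab : a ≤ b)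
    (hφ : ∀ x ∈ Icc a b, DifferentiableAt ℝ φ x)
    (hconv : ConvexOn ℝ (Icc a b) fun x => deriv φ x ^ 2)
    (hint : IntervalIntegrable (fun x => deriv φ x ^ 2) volume a b) :
    (φ b - φ a) ^ 2 ≤ (b - a) ^ 2 * (deriv φ a ^ 2 + deriv φ b ^ 2) / 2 := by
  have hφ' : IntervalIntegrable (deriv φ) volume a b :=
    (intervalIntegrable_iff_integrableOn_Ioc_of_le hab).2 <|
      .of_sq measure_Ioc_lt_top.ne (measurable_deriv φ).aestronglyMeasurable hint.1
  calc (φ b - φ a) ^ 2 = (∫ x in a..b, deriv φ x) ^ 2 := by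
        rw [integral_deriv_eq_sub (by rwa [uIcc_of_le hab]) hφ']
    _ ≤ (b - a) * ∫ x in a..b, deriv φ x ^ 2 := sq_intervalIntegral_le hab hφ' hint
    _ ≤ (b - a) * ((b - a) * (deriv φ a ^ 2 + deriv φ b ^ 2) / 2) :=
        mul_le_mul_of_nonneg_left (hconv.integral_le_mul_add_div_two hab hint) (sub_nonneg.2 hab)
    _ = (b - a) ^ 2 * (deriv φ a ^ 2 + deriv φ b ^ 2) / 2 := by ring

/-- Scalar mean-value inequality: if `ψ = (φ')²` is convex, then
`(φ a - φ b)² ≤ (1/2) (a-b)² (ψ a + ψ b)`. -/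
theorem scalar_mean_value_inequality (φ ψ : ℝ → ℝ) (hφ : Differentiable ℝ φ)
    (hψ : ψ = fun s => (deriv φ s) ^ 2) (hconv : ConvexOn ℝ Set.univ ψ) (a b : ℝ) :
    (φ a - φ b) ^ 2 ≤ (1 / 2) * (a - b) ^ 2 * (ψ a + ψ b) := by
  subst hψ
  have key {x y : ℝ} (hxy : x ≤ y) :
      (φ y - φ x) ^ 2 ≤ (y - x) ^ 2 * (deriv φ x ^ 2 + deriv φ y ^ 2) / 2 :=
    sq_sub_le_of_convexOn_deriv_sq hxy (fun z _ => hφ z)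
      (hconv.subset (subset_univ _) (convex_Icc x y))
      ((hconv.continuousOn isOpen_univ).mono (subset_univ _)).intervalIntegrable
  rcases le_total b a with hba | hab
  · linarith [key hba]
  · linarith [key hab, sub_sq_comm (φ a) (φ b), sub_sq_comm a b]
end

section
/- Let A and B be d × d Hermitian complex matrices, and let φ : ℝ → ℝ be a differentiable function whose squared derivative ψ = (φ')² is convex. Then tr[(φ(A) - φ(B))²] ≤ (1/2) · tr[(A - B)² · (ψ(A) + ψ(B))], where φ and ψ are applied as spectral (matrix) functions. -/
/-!
With `A = ∑ λᵢ uᵢuᵢ*` and `B = ∑ μⱼ vⱼvⱼ*`, one has `tr (f(A) g(B)) = ∑ᵢⱼ |⟨uᵢ, vⱼ⟩|² f(λᵢ) g(μⱼ)`,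
a positive linear functional of `F(x, y) = f(x) g(y)`. After cyclic rearrangements of the trace,
the two sides of the inequality are the values of this functional at `(φ x - φ y)²` and
`(x - y)² (ψ x + ψ y) / 2`, so it suffices to compare these pointwise (generalized Klein
inequality). For the scalar inequality write `φ x - φ y = (x - y) ∫₀¹ φ'(y + t (x - y)) dt`, apply
Jensen's inequality `(∫ g)² ≤ ∫ g²`, and bound `∫₀¹ ψ(y + t (x - y)) dt ≤ (ψ x + ψ y) / 2` by
convexity of `ψ`.
-/

open intervalIntegral
open MeasureTheory (volume)

lemma sq_intervalIntegral_le_intervalIntegral_sq {g : ℝ → ℝ}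
    (hg : IntervalIntegrable g volume 0 1) (hg2 : IntervalIntegrable (fun t => g t ^ 2) volume 0 1) :
    (∫ t in (0:ℝ)..1, g t) ^ 2 ≤ ∫ t in (0:ℝ)..1, g t ^ 2 := by
  set m := ∫ t in (0:ℝ)..1, g t
  have hvar : ∫ t in (0:ℝ)..1, (g t - m) ^ 2 = (∫ t in (0:ℝ)..1, g t ^ 2) - m ^ 2 := by
    have hexp : ∀ t, (g t - m) ^ 2 = g t ^ 2 - 2 * m * g t + m ^ 2 := fun t => by ring
    simp only [hexp]
    rw [integral_add (hg2.sub (hg.const_mul _)) intervalIntegrable_const,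
      integral_sub hg2 (hg.const_mul _), integral_const_mul]
    simp only [integral_const, sub_zero, smul_eq_mul, m]
    ring
  have hvar_nonneg : 0 ≤ ∫ t in (0:ℝ)..1, (g t - m) ^ 2 :=
    integral_nonneg zero_le_one fun t _ => sq_nonneg (g t - m)
  linarith

lemma ConvexOn.intervalIntegral_comp_segment_le {ψ : ℝ → ℝ} (hψ : ConvexOn ℝ Set.univ ψ)
    (x y : ℝ) : ∫ t in (0:ℝ)..1, ψ (y + t * (x - y)) ≤ (ψ x + ψ y) / 2 := by
  have hψc : Continuous ψ := continuousOn_univ.mp (hψ.continuousOn isOpen_univ)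
  have hchord : ∀ t ∈ Set.Icc (0:ℝ) 1, ψ (y + t * (x - y)) ≤ (1 - t) * ψ y + t * ψ x := by
    intro t ht
    have := hψ.2 (Set.mem_univ y) (Set.mem_univ x) (sub_nonneg.2 ht.2) ht.1 (by ring)
    simp only [smul_eq_mul] at this
    rwa [show y + t * (x - y) = (1 - t) * y + t * x by ring]
  calc ∫ t in (0:ℝ)..1, ψ (y + t * (x - y))
      ≤ ∫ t in (0:ℝ)..1, ((1 - t) * ψ y + t * ψ x) :=
        integral_mono_on zero_le_one (Continuous.intervalIntegrable (by fun_prop) _ _)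
          (Continuous.intervalIntegrable (by fun_prop) _ _) hchord
    _ = (ψ x + ψ y) / 2 := by
        rw [integral_add (Continuous.intervalIntegrable (by fun_prop) _ _)
          (Continuous.intervalIntegrable (by fun_prop) _ _), integral_mul_const,
          integral_mul_const, integral_sub intervalIntegrable_const intervalIntegrable_id]
        norm_num
        ring

lemma sq_sub_le_of_convexOn_sq_deriv {φ : ℝ → ℝ} (hφ : Differentiable ℝ φ)
    (hconv : ConvexOn ℝ Set.univ fun s => deriv φ s ^ 2) (x y : ℝ) :
    (φ x - φ y) ^ 2 ≤ 1 / 2 * ((x - y) ^ 2 * (deriv φ x ^ 2 + deriv φ y ^ 2)) := by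
  set g : ℝ → ℝ := fun t => deriv φ (y + t * (x - y))
  have hsq : Continuous fun t => g t ^ 2 :=
    (continuousOn_univ.mp (hconv.continuousOn isOpen_univ)).comp (by fun_prop)
  -- `|g| = √(g²)` is continuous, which makes the merely measurable `g` integrable.
  have hg : IntervalIntegrable g volume 0 1 :=
    ((hsq.sqrt).intervalIntegrable 0 1).mono_fun
      ((measurable_deriv φ).comp (by fun_prop)).aestronglyMeasurable
      (Filter.Eventually.of_forall fun t => by simp [Real.sqrt_sq_eq_abs])
  have hftc : φ x - φ y = (x - y) * ∫ t in (0:ℝ)..1, g t := by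
    have hderiv : ∀ t ∈ Set.uIcc (0:ℝ) 1,
        HasDerivAt (fun t => φ (y + t * (x - y))) ((x - y) * g t) t := fun t _ => by
      simpa [mul_comm, Function.comp_def, g] using (hφ _).hasDerivAt.comp t
        (((hasDerivAt_id t).mul_const (x - y)).const_add y)
    rw [← integral_const_mul, integral_eq_sub_of_hasDerivAt hderiv (hg.const_mul _)]
    simp
  calc (φ x - φ y) ^ 2 = (x - y) ^ 2 * (∫ t in (0:ℝ)..1, g t) ^ 2 := by rw [hftc]; ring
    _ ≤ (x - y) ^ 2 * ∫ t in (0:ℝ)..1, g t ^ 2 := by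
        gcongr
        exact sq_intervalIntegral_le_intervalIntegral_sq hg (hsq.intervalIntegrable 0 1)
    _ ≤ (x - y) ^ 2 * ((deriv φ x ^ 2 + deriv φ y ^ 2) / 2) := by
        gcongr
        exact hconv.intervalIntegral_comp_segment_le x y
    _ = 1 / 2 * ((x - y) ^ 2 * (deriv φ x ^ 2 + deriv φ y ^ 2)) := by ring

namespace Matrix.IsHermitian

variable {n 𝕜 : Type*} [RCLike 𝕜] [Fintype n] [DecidableEq n] {A B : Matrix n n 𝕜}

lemma cfc_mul_cfc (hA : A.IsHermitian) (f g : ℝ → ℝ) :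
    hA.cfc f * hA.cfc g = hA.cfc (fun x => f x * g x) := by
  have hfin := A.finite_real_spectrum
  simp only [← hA.cfc_eq]
  exact (cfc_mul f g A (hfin.continuousOn _) (hfin.continuousOn _)).symm

lemma cfc_id (hA : A.IsHermitian) : hA.cfc (fun x => x) = A := by
  rw [← hA.cfc_eq, cfc_id' ℝ A hA.isSelfAdjoint]

lemma cfc_one (hA : A.IsHermitian) : hA.cfc (fun _ => 1) = 1 := by
  rw [← hA.cfc_eq, cfc_const_one ℝ A hA.isSelfAdjoint]

/-- The weights `‖(U_A* U_B) i j‖² = |⟨uᵢ, vⱼ⟩|²` are the squared overlaps of the eigenbases. -/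
noncomputable def spectralPairing (hA : A.IsHermitian) (hB : B.IsHermitian) :
    (ℝ → ℝ → ℝ) →ₗ[ℝ] ℝ where
  toFun F := ∑ i, ∑ j,
    ‖(star (hA.eigenvectorUnitary : Matrix n n 𝕜) * hB.eigenvectorUnitary) i j‖ ^ 2 *
      F (hA.eigenvalues i) (hB.eigenvalues j)
  map_add' F G := by
    simp only [Pi.add_apply, mul_add, Finset.sum_add_distrib]
  map_smul' c F := by
    simp only [Pi.smul_apply, smul_eq_mul, RingHom.id_apply, Finset.mul_sum]
    exact Finset.sum_congr rfl fun i _ => Finset.sum_congr rfl fun j _ => by ring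

lemma spectralPairing_apply (hA : A.IsHermitian) (hB : B.IsHermitian) (F : ℝ → ℝ → ℝ) :
    spectralPairing hA hB F = ∑ i, ∑ j,
      ‖(star (hA.eigenvectorUnitary : Matrix n n 𝕜) * hB.eigenvectorUnitary) i j‖ ^ 2 *
        F (hA.eigenvalues i) (hB.eigenvalues j) :=
  rfl

lemma spectralPairing_mono (hA : A.IsHermitian) (hB : B.IsHermitian) {F G : ℝ → ℝ → ℝ}
    (hFG : ∀ x y, F x y ≤ G x y) : spectralPairing hA hB F ≤ spectralPairing hA hB G :=
  Finset.sum_le_sum fun _ _ => Finset.sum_le_sum fun _ _ =>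
    mul_le_mul_of_nonneg_left (hFG _ _) (sq_nonneg _)

lemma spectralPairing_swap (hA : A.IsHermitian) (hB : B.IsHermitian) (F : ℝ → ℝ → ℝ) :
    spectralPairing hB hA F = spectralPairing hA hB fun x y => F y x := by
  rw [spectralPairing_apply, spectralPairing_apply, Finset.sum_comm]
  refine Finset.sum_congr rfl fun i _ => Finset.sum_congr rfl fun j _ => ?_
  rw [← star_star (hB.eigenvectorUnitary : Matrix n n 𝕜), ← star_mul, star_star, star_apply,
    norm_star]

lemma trace_cfc_mul_cfc (hA : A.IsHermitian) (hB : B.IsHermitian) (f g : ℝ → ℝ) :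
    (hA.cfc f * hB.cfc g).trace = (spectralPairing hA hB fun x y => f x * g y : 𝕜) := by
  rw [spectralPairing_apply]
  set W : Matrix n n 𝕜 := star (hA.eigenvectorUnitary : Matrix n n 𝕜) * hB.eigenvectorUnitary
  have hcycle : (hA.cfc f * hB.cfc g).trace =
      (diagonal (RCLike.ofReal ∘ f ∘ hA.eigenvalues) *
        (W * diagonal (RCLike.ofReal ∘ g ∘ hB.eigenvalues) * star W)).trace := by
    simp only [Matrix.IsHermitian.cfc, Unitary.conjStarAlgAut_apply, W, star_mul, star_star,
      mul_assoc]
    rw [trace_mul_comm]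
    simp only [mul_assoc]
  rw [hcycle, trace]
  push_cast
  refine Finset.sum_congr rfl fun i _ => ?_
  rw [diag_apply, diagonal_mul, mul_apply, Finset.mul_sum]
  refine Finset.sum_congr rfl fun j _ => ?_
  rw [mul_diagonal, star_apply, RCLike.star_def, ← RCLike.mul_conj]
  simp only [Function.comp_apply]
  ring

lemma trace_sq_sub_mul_cfc_left (hA : A.IsHermitian) (hB : B.IsHermitian) (f g h : ℝ → ℝ) :
    ((hA.cfc f - hB.cfc g) ^ 2 * hA.cfc h).trace =
      (spectralPairing hA hB fun x y => h x * (f x - g y) ^ 2 : 𝕜) := by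
  set X := hA.cfc f
  set Y := hB.cfc g
  set H := hA.cfc h
  have expand : (X - Y) ^ 2 * H = X * X * H - X * Y * H - Y * X * H + Y * Y * H := by
    noncomm_ring
  have hXXH : X * X * H = hA.cfc (fun x => f x * f x * h x) * hB.cfc (fun _ => 1) := by
    rw [hB.cfc_one, mul_one, hA.cfc_mul_cfc, hA.cfc_mul_cfc]
  have hXYH : (X * Y * H).trace = (hA.cfc (fun x => h x * f x) * Y).trace := by
    rw [trace_mul_comm, ← mul_assoc, hA.cfc_mul_cfc]
  have hYXH : (Y * X * H).trace = (hA.cfc (fun x => f x * h x) * Y).trace := by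
    rw [mul_assoc, trace_mul_comm, hA.cfc_mul_cfc]
  have hYYH : (Y * Y * H).trace = (H * hB.cfc (fun y => g y * g y)).trace := by
    rw [trace_mul_comm, hB.cfc_mul_cfc]
  rw [expand, trace_add, trace_sub, trace_sub, hXXH, hXYH, hYXH, hYYH, trace_cfc_mul_cfc,
    trace_cfc_mul_cfc, trace_cfc_mul_cfc, trace_cfc_mul_cfc]
  norm_cast
  rw [← map_sub, ← map_sub, ← map_add]
  congr 1
  ext x y
  simp only [Pi.add_apply, Pi.sub_apply]
  ring

lemma trace_sq_sub_mul_cfc_right (hA : A.IsHermitian) (hB : B.IsHermitian) (f g h : ℝ → ℝ) :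
    ((hA.cfc f - hB.cfc g) ^ 2 * hB.cfc h).trace =
      (spectralPairing hA hB fun x y => h y * (f x - g y) ^ 2 : 𝕜) := by
  rw [← neg_sub, neg_sq, trace_sq_sub_mul_cfc_left hB hA, spectralPairing_swap]
  simp only [← neg_sub (g _), neg_sq]

lemma trace_sq_cfc_sub_cfc (hA : A.IsHermitian) (hB : B.IsHermitian) (f g : ℝ → ℝ) :
    ((hA.cfc f - hB.cfc g) ^ 2).trace =
      (spectralPairing hA hB fun x y => (f x - g y) ^ 2 : 𝕜) := by
  simpa [hA.cfc_one] using trace_sq_sub_mul_cfc_left hA hB f g fun _ => 1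

lemma trace_sq_sub_mul_cfc_add_cfc (hA : A.IsHermitian) (hB : B.IsHermitian) (f g h : ℝ → ℝ) :
    ((hA.cfc f - hB.cfc g) ^ 2 * (hA.cfc h + hB.cfc h)).trace =
      (spectralPairing hA hB fun x y => (f x - g y) ^ 2 * (h x + h y) : 𝕜) := by
  rw [mul_add, trace_add, trace_sq_sub_mul_cfc_left, trace_sq_sub_mul_cfc_right,
    ← RCLike.ofReal_add, ← map_add]
  congr 2
  ext x y
  simp only [Pi.add_apply]
  ring

end Matrix.IsHermitian

open Matrix

/-- Mean-value trace inequality (Lemma 3.1): for Hermitian `A`, `B` and `φ` with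
convex squared derivative `ψ = (φ')²`,
`tr[(φ(A) - φ(B))²] ≤ (1/2) tr[(A - B)² (ψ(A) + ψ(B))]`,
where `φ`, `ψ` act spectrally via `Matrix.IsHermitian.cfc`. -/
theorem mean_value_trace_inequality {d : ℕ} (A B : Matrix (Fin d) (Fin d) ℂ)
    (hA : A.IsHermitian) (hB : B.IsHermitian)
    (φ ψ : ℝ → ℝ) (hφ : Differentiable ℝ φ) (hψ : ψ = fun s => (deriv φ s) ^ 2)
    (hconv : ConvexOn ℝ Set.univ ψ) :
    (((hA.cfc φ - hB.cfc φ) ^ 2).trace).re ≤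
      (1 / 2) * (((A - B) ^ 2 * (hA.cfc ψ + hB.cfc ψ)).trace).re := by
  subst hψ
  calc (((hA.cfc φ - hB.cfc φ) ^ 2).trace).re
      = hA.spectralPairing hB fun x y => (φ x - φ y) ^ 2 := by
        rw [hA.trace_sq_cfc_sub_cfc hB, ← RCLike.re_to_complex, RCLike.ofReal_re]
    _ ≤ hA.spectralPairing hB
          ((1 / 2 : ℝ) • fun x y => (x - y) ^ 2 * (deriv φ x ^ 2 + deriv φ y ^ 2)) :=
        hA.spectralPairing_mono hB fun x y => sq_sub_le_of_convexOn_sq_deriv hφ hconv x y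
    _ = (1 / 2) * (((A - B) ^ 2 * (hA.cfc _ + hB.cfc _)).trace).re := by
        have hRHS := hA.trace_sq_sub_mul_cfc_add_cfc hB (fun x => x) (fun y => y)
          fun s => deriv φ s ^ 2
        rw [hA.cfc_id, hB.cfc_id] at hRHS
        rw [map_smul, smul_eq_mul, hRHS, ← RCLike.re_to_complex, RCLike.ofReal_re]
end

section
/- Let f be a random d × d Hermitian matrix. For any λ > 0 and θ > 0, P{‖f‖ ≥ λ} ≤ 2 e^{-θλ} · E tr cosh(θ f), where ‖·‖ is the ℓ₂ operator norm. -/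
open MeasureTheory Matrix
open scoped Matrix.Norms.L2Operator

/-- Real trace of the spectral function `φ(A)` of a Hermitian matrix. -/
noncomputable def trFn {d : ℕ} (φ : ℝ → ℝ) {A : Matrix (Fin d) (Fin d) ℂ}
    (hA : A.IsHermitian) : ℝ :=
  ((hA.cfc φ).trace).re

/-!
On the event `λ ≤ ‖f‖` some eigenvalue `a` of `f` has `|a| = ‖f‖ ≥ λ`, so
`tr cosh(θ f) ≥ cosh(θ a) ≥ cosh(θ λ) ≥ e^{θλ}/2`. Markov's inequality for the nonnegative
random variable `tr cosh(θ f)` at level `e^{θλ}/2` gives the bound.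
-/

lemma Real.exp_le_two_mul_cosh (x : ℝ) : Real.exp x ≤ 2 * Real.cosh x := by
  rw [Real.cosh_eq]
  linarith [Real.exp_pos (-x)]

namespace Matrix.IsHermitian

variable {n 𝕜 : Type*} [Fintype n] [DecidableEq n] [RCLike 𝕜]

lemma exists_abs_eigenvalues_eq_l2_opNorm [Nonempty n] {A : Matrix n n ℂ} (hA : A.IsHermitian) :
    ∃ i, |hA.eigenvalues i| = ‖A‖ := by
  have h := CStarAlgebra.norm_or_neg_norm_mem_spectrum (a := A) hA.isSelfAdjoint
  rw [hA.spectrum_real_eq_range_eigenvalues] at h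
  rcases h with ⟨i, hi⟩ | ⟨i, hi⟩ <;> exact ⟨i, by simp [hi]⟩

lemma trace_cfc {A : Matrix n n 𝕜} (hA : A.IsHermitian) (φ : ℝ → ℝ) :
    (hA.cfc φ).trace = ∑ i, (φ (hA.eigenvalues i) : 𝕜) := by
  rw [Matrix.IsHermitian.cfc, Unitary.conjStarAlgAut_apply, trace_mul_cycle,
    Unitary.coe_star_mul_self, one_mul, trace_diagonal]
  rfl

end Matrix.IsHermitian

section trFn

variable {d : ℕ} {A : Matrix (Fin d) (Fin d) ℂ}

lemma trFn_eq_sum (φ : ℝ → ℝ) (hA : A.IsHermitian) :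
    trFn φ hA = ∑ i, φ (hA.eigenvalues i) := by
  simp [trFn, hA.trace_cfc]

lemma trFn_nonneg {φ : ℝ → ℝ} (hφ : ∀ x, 0 ≤ φ x) (hA : A.IsHermitian) : 0 ≤ trFn φ hA := by
  rw [trFn_eq_sum]
  exact Finset.sum_nonneg fun i _ => hφ _

lemma apply_eigenvalues_le_trFn {φ : ℝ → ℝ} (hφ : ∀ x, 0 ≤ φ x) (hA : A.IsHermitian)
    (i : Fin d) : φ (hA.eigenvalues i) ≤ trFn φ hA := by
  rw [trFn_eq_sum]
  exact Finset.single_le_sum (fun j _ => hφ _) (Finset.mem_univ i)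

lemma cosh_mul_l2_opNorm_le_trFn [NeZero d] (hA : A.IsHermitian) (θ : ℝ) :
    Real.cosh (θ * ‖A‖) ≤ trFn (fun s => Real.cosh (θ * s)) hA := by
  obtain ⟨i, hi⟩ := hA.exists_abs_eigenvalues_eq_l2_opNorm
  calc Real.cosh (θ * ‖A‖) = Real.cosh (θ * hA.eigenvalues i) := by
        rw [← hi, ← Real.cosh_abs, abs_mul, abs_abs, ← abs_mul, Real.cosh_abs]
    _ ≤ trFn (fun s => Real.cosh (θ * s)) hA :=
        apply_eigenvalues_le_trFn (fun _ => (Real.cosh_pos _).le) hA i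

lemma exp_mul_le_two_mul_trFn_cosh (hA : A.IsHermitian) (θ : ℝ) {lam : ℝ} (hlam : 0 < lam)
    (hA_norm : lam ≤ ‖A‖) :
    Real.exp (θ * lam) ≤ 2 * trFn (fun s => Real.cosh (θ * s)) hA := by
  have : NeZero d := ⟨by rintro rfl; simp [Subsingleton.elim A 0] at hA_norm; linarith⟩
  have hcosh : Real.cosh (θ * lam) ≤ Real.cosh (θ * ‖A‖) := by
    rw [Real.cosh_le_cosh, abs_mul, abs_mul, abs_of_pos hlam, abs_of_pos (hlam.trans_le hA_norm)]
    exact mul_le_mul_of_nonneg_left hA_norm (abs_nonneg θ)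
  linarith [Real.exp_le_two_mul_cosh (θ * lam), cosh_mul_l2_opNorm_le_trFn hA θ]

end trFn

theorem matrix_moment_method_general {Ω : Type*} [MeasurableSpace Ω] (μ : Measure Ω)
    [IsProbabilityMeasure μ] {d : ℕ}
    (f : Ω → Matrix (Fin d) (Fin d) ℂ) (hf : ∀ ω, (f ω).IsHermitian)
    (lam θ : ℝ) (hlam : 0 < lam)
    (hint : Integrable (fun ω => trFn (fun s => Real.cosh (θ * s)) (hf ω)) μ) :
    (μ {ω | lam ≤ ‖f ω‖}).toReal ≤
      2 * Real.exp (-θ * lam) * ∫ ω, trFn (fun s => Real.cosh (θ * s)) (hf ω) ∂μ := by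
  set g := fun ω => trFn (fun s => Real.cosh (θ * s)) (hf ω)
  set ε := Real.exp (θ * lam) / 2
  have hsub : {ω | lam ≤ ‖f ω‖} ⊆ {ω | ε ≤ g ω} := fun ω (hω : lam ≤ ‖f ω‖) => by
    simp only [Set.mem_ofPred_eq, ε, g]
    linarith [exp_mul_le_two_mul_trFn_cosh (hf ω) θ hlam hω]
  have markov : ε * μ.real {ω | ε ≤ g ω} ≤ ∫ ω, g ω ∂μ :=
    mul_meas_ge_le_integral_of_nonneg
      (ae_of_all _ fun ω => trFn_nonneg (fun _ => (Real.cosh_pos _).le) (hf ω)) hint ε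
  have hε : 2 * Real.exp (-θ * lam) * ε = 1 := by
    rw [neg_mul, Real.exp_neg]
    simp only [ε]
    field_simp
  calc (μ {ω | lam ≤ ‖f ω‖}).toReal ≤ μ.real {ω | ε ≤ g ω} := measureReal_mono hsub
    _ = 2 * Real.exp (-θ * lam) * (ε * μ.real {ω | ε ≤ g ω}) := by rw [← mul_assoc, hε, one_mul]
    _ ≤ 2 * Real.exp (-θ * lam) * ∫ ω, g ω ∂μ := by gcongr

/-- Matrix moment method: `P{‖f‖ ≥ λ} ≤ 2 e^{-θλ} E tr cosh(θ f)`, where `‖·‖` is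
the ℓ₂ operator norm. -/
theorem matrix_moment_method {Ω : Type*} [MeasurableSpace Ω] (μ : Measure Ω)
    [IsProbabilityMeasure μ] {d : ℕ}
    (f : Ω → Matrix (Fin d) (Fin d) ℂ) (hf : ∀ ω, (f ω).IsHermitian)
    (lam θ : ℝ) (hlam : 0 < lam) (hθ : 0 < θ)
    (hint : Integrable (fun ω => trFn (fun s => Real.cosh (θ * s)) (hf ω)) μ) :
    (μ {ω | lam ≤ ‖f ω‖}).toReal ≤
      2 * Real.exp (-θ * lam) * ∫ ω, trFn (fun s => Real.cosh (θ * s)) (hf ω) ∂μ :=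
  matrix_moment_method_general μ f hf lam θ hlam hint
end
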